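/- Let A ∈ ℂ^{n×n}, B ∈ ℂ^{n×m}, C ∈ ℂ^{p×n}. If there exists K ∈ ℂ^{m×p} such that spectrum(A) ∩ spectrum(A + BKC) = ∅, then the pair (A,B) is controllable and the pair (A,C) is observable. -/

import Mathlib

open Matrix

/-- PBH controllability: `rank [λI − A, B] = n` for all `λ ∈ ℂ`. -/
def Controllable {n m : Type*} [Fintype n] [Fintype m] [DecidableEq n]
    (A : Matrix n n ℂ) (B : Matrix n m ℂ) : Prop :=
  ∀ lam : ℂ, (Matrix.fromCols (lam • (1 : Matrix n n ℂ) - A) B).rank = Fintype.card n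

/-- PBH observability: `rank [λI − A; C] = n` for all `λ ∈ ℂ`. -/
def Observable {n p : Type*} [Fintype n] [Fintype p] [DecidableEq n]
    (A : Matrix n n ℂ) (C : Matrix p n ℂ) : Prop :=
  ∀ lam : ℂ, (Matrix.fromRows (lam • (1 : Matrix n n ℂ) - A) C).rank = Fintype.card n

/-!
If `[λI − A; C]` drops rank, a kernel vector `v` is an eigenvector of `A` with `C v = 0`, hence
`(A + B K C) v = λ v` for every `K`, and `λ` is a common eigenvalue. Controllability is the
transposed statement: `(A + B K C)ᵀ = Aᵀ + Cᵀ Kᵀ Bᵀ`, and transposition preserves spectra.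
-/

namespace Matrix

variable {K k n : Type*} [Field K] [Fintype n]

theorem exists_mulVec_eq_zero_of_rank_ne_card {M : Matrix k n K}
    (hM : M.rank ≠ Fintype.card n) : ∃ v ≠ 0, M *ᵥ v = 0 := by
  contrapose! hM
  have hinj : Function.Injective M.mulVecLin :=
    LinearMap.ker_eq_bot.mp (ker_mulVecLin_eq_bot_iff.mpr fun v hv => by_contra fun h => hM v h hv)
  rw [rank, LinearMap.finrank_range_of_inj hinj, Module.finrank_fintype_fun_eq_card]

variable [DecidableEq n]

theorem spectrum_transpose (A : Matrix n n K) : spectrum K Aᵀ = spectrum K A := by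
  ext lam
  rw [mem_spectrum_iff_isRoot_charpoly, mem_spectrum_iff_isRoot_charpoly, charpoly_transpose]

theorem mem_spectrum_of_mulVec_eq_smul {A : Matrix n n K} {lam : K} {v : n → K} (hv : v ≠ 0)
    (hAv : A *ᵥ v = lam • v) : lam ∈ spectrum K A := by
  rw [← spectrum_toLin']
  exact (Module.End.hasEigenvalue_of_hasEigenvector
    (Module.End.hasEigenvector_iff.mpr ⟨Module.End.mem_eigenspace_iff.mpr hAv, hv⟩)).mem_spectrum

end Matrix

section PBH

variable {n m p : Type*} [Fintype n] [Fintype m] [Fintype p] [DecidableEq n]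

theorem controllable_iff_observable_transpose (A : Matrix n n ℂ) (B : Matrix n m ℂ) :
    Controllable A B ↔ Observable Aᵀ Bᵀ := by
  refine forall_congr' fun lam => ?_
  rw [← rank_transpose, transpose_fromCols, transpose_sub, transpose_smul, transpose_one]

theorem exists_eigenvector_mulVec_eq_zero_of_not_observable {A : Matrix n n ℂ} {C : Matrix p n ℂ}
    (h : ¬ Observable A C) : ∃ lam : ℂ, ∃ v ≠ 0, A *ᵥ v = lam • v ∧ C *ᵥ v = 0 := by
  obtain ⟨lam, hrank⟩ := not_forall.mp h
  obtain ⟨v, hv, hker⟩ := exists_mulVec_eq_zero_of_rank_ne_card hrank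
  rw [fromRows_mulVec, ← Sum.elim_zero_zero, Sum.elim_eq_iff] at hker
  obtain ⟨hX, hC⟩ := hker
  rw [sub_mulVec, smul_mulVec, one_mulVec, sub_eq_zero] at hX
  exact ⟨lam, v, hv, hX.symm, hC⟩

theorem observable_of_disjoint_spectrum_feedback {A : Matrix n n ℂ} {B : Matrix n m ℂ}
    {C : Matrix p n ℂ} {K : Matrix m p ℂ}
    (hK : Disjoint (spectrum ℂ A) (spectrum ℂ (A + B * K * C))) : Observable A C := by
  by_contra h
  obtain ⟨lam, v, hv, hAv, hCv⟩ := exists_eigenvector_mulVec_eq_zero_of_not_observable h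
  have hfeedback : (A + B * K * C) *ᵥ v = lam • v := by
    rw [add_mulVec, ← mulVec_mulVec, hCv, mulVec_zero, add_zero, hAv]
  exact Set.disjoint_left.mp hK (mem_spectrum_of_mulVec_eq_smul hv hAv)
    (mem_spectrum_of_mulVec_eq_smul hv hfeedback)

end PBH

theorem minimal_of_static_output_feedback (n m p : ℕ)
    (A : Matrix (Fin n) (Fin n) ℂ) (B : Matrix (Fin n) (Fin m) ℂ)
    (C : Matrix (Fin p) (Fin n) ℂ)
    (h : ∃ K : Matrix (Fin m) (Fin p) ℂ,
      spectrum ℂ A ∩ spectrum ℂ (A + B * K * C) = ∅) :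
    Controllable A B ∧ Observable A C := by
  obtain ⟨K, hK⟩ := h
  have hdisj := Set.disjoint_iff_inter_eq_empty.mpr hK
  refine ⟨?_, observable_of_disjoint_spectrum_feedback hdisj⟩
  rw [controllable_iff_observable_transpose]
  have hdual : (A + B * K * C)ᵀ = Aᵀ + Cᵀ * Kᵀ * Bᵀ := by
    rw [transpose_add, transpose_mul, transpose_mul, Matrix.mul_assoc]
  refine observable_of_disjoint_spectrum_feedback (B := Cᵀ) (K := Kᵀ) ?_
  rwa [spectrum_transpose, ← hdual, spectrum_transpose]
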